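/- Let (λ,μ,π) be a simplex-like triple with at most r+1 columns each, let a ≥ 0 and b,c ≥ r+1, and define 𝜆̃ = (a^{bc}) + λ (adding a rectangle on top of columns), 𝜇̃ = (b^{ac}, μ), 𝜋̃ = (c^{ab}, π) via 𝜆̃^T = ((bc)^a, λ^T), 𝜇̃^T = μ^T + ((ac)^b), 𝜋̃^T = π^T + ((ab)^c). Then the map P ↦ Q = ({0,…,a−1}×{0,…,b−1}×{0,…,c−1}) ∪ {(a+x,y,z) : (x,y,z) ∈ P} is a bijection between point sets P with marginals (λ^T,μ^T,π^T) and point sets Q with marginals (𝜆̃^T,𝜇̃^T,𝜋̃^T); moreover every such Q is a pyramid. -/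

import Mathlib

open CategoryTheory MonoidalCategory
open scoped TensorProduct

set_option synthInstance.maxHeartbeats 1000000
set_option maxHeartbeats 1000000
set_option maxRecDepth 4000

namespace KronPaper

noncomputable section

/-- The `x`-marginal of a point set `P ⊆ ℕ³`. -/
def margX (P : Finset (ℕ × ℕ × ℕ)) (i : ℕ) : ℕ := (P.filter (fun p => p.1 = i)).card

/-- The `y`-marginal of a point set `P ⊆ ℕ³`. -/
def margY (P : Finset (ℕ × ℕ × ℕ)) (j : ℕ) : ℕ := (P.filter (fun p => p.2.1 = j)).card

/-- The `z`-marginal of a point set `P ⊆ ℕ³`. -/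
def margZ (P : Finset (ℕ × ℕ × ℕ)) (k : ℕ) : ℕ := (P.filter (fun p => p.2.2 = k)).card

/-- `P` has marginals `(λᵀ, μᵀ, πᵀ)`, where the transpose is recorded via column lengths. -/
def HasMarginals (P : Finset (ℕ × ℕ × ℕ)) (l m q : YoungDiagram) : Prop :=
  (∀ i, margX P i = l.colLen i) ∧ (∀ j, margY P j = m.colLen j) ∧ (∀ k, margZ P k = q.colLen k)

/-- A pyramid is a downward-closed point set in `ℕ³`. -/
def IsPyramid (P : Finset (ℕ × ℕ × ℕ)) : Prop :=
  ∀ x y z x' y' z', (x, y, z) ∈ P → x' ≤ x → y' ≤ y → z' ≤ z → (x', y', z') ∈ P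

/-- `t^λ_{μ,π}`: the number of point sets with marginals `(λᵀ, μᵀ, πᵀ)`. -/
def tCount (l m q : YoungDiagram) : ℕ :=
  Nat.card {P : Finset (ℕ × ℕ × ℕ) // HasMarginals P l m q}

/-- `p^λ_{μ,π}`: the number of pyramids with marginals `(λᵀ, μᵀ, πᵀ)`. -/
def pCount (l m q : YoungDiagram) : ℕ :=
  Nat.card {P : Finset (ℕ × ℕ × ℕ) // HasMarginals P l m q ∧ IsPyramid P}

/-- The simplex `P_r = {(x,y,z) ∈ ℕ³ : x + y + z ≤ r − 1}` of side length `r`. -/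
def simplexN (r : ℕ) : Finset (ℕ × ℕ × ℕ) :=
  (Finset.range r ×ˢ (Finset.range r ×ˢ Finset.range r)).filter
    (fun p => p.1 + p.2.1 + p.2.2 + 1 ≤ r)

/-- `Σ_{(x,y,z) ∈ P} (x + y + z)`, the projection of the barycenter onto the diagonal. -/
def ssum (P : Finset (ℕ × ℕ × ℕ)) : ℕ := ∑ p ∈ P, (p.1 + p.2.1 + p.2.2)

/-- `p(n)` computed with respect to `r`:  the minimal possible value of `ssum` over `n`-element
point sets, when `|P_r| ≤ n < |P_{r+1}|`. -/
def pval (n r : ℕ) : ℕ := ssum (simplexN r) + r * (n - (simplexN r).card)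

/-- The largest `r` with `|P_r| ≤ n`. -/
def rIndex (n : ℕ) : ℕ := Nat.findGreatest (fun r => (simplexN r).card ≤ n) n

/-- `p(n)`: the minimal possible value of `Σ_{(x,y,z)∈P}(x+y+z)` over `n`-element point sets. -/
def pOfN (n : ℕ) : ℕ := pval n (rIndex n)

/-- `Σ_i i·λᵀ_i`. -/
def wsum (l : YoungDiagram) : ℕ := ∑ i ∈ Finset.range (l.rowLen 0), i * l.colLen i

/-- A triple of partitions of `n ≠ 0` is simplex-like if for some `r` all three have at most
`r + 1` columns and `Σ_i i·λᵀ_i + Σ_j j·μᵀ_j + Σ_k k·πᵀ_k = p(n)`. -/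
def SimplexLike (l m q : YoungDiagram) : Prop :=
  l.card ≠ 0 ∧ l.card = m.card ∧ l.card = q.card ∧
  (∃ r : ℕ, l.rowLen 0 ≤ r + 1 ∧ m.rowLen 0 ≤ r + 1 ∧ q.rowLen 0 ≤ r + 1) ∧
  wsum l + wsum m + wsum q = pOfN l.card

/-- Adjoining a point set to an `a × b × c` rectangular box along the `x`-direction. -/
def pedestalMap (a b c : ℕ) (P : Finset (ℕ × ℕ × ℕ)) : Finset (ℕ × ℕ × ℕ) :=
  (Finset.range a ×ˢ (Finset.range b ×ˢ Finset.range c)) ∪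
    P.image (fun p => (a + p.1, p.2.1, p.2.2))

/-- `Q` has the pedestalled marginals `(𝜆̃ᵀ, 𝜇̃ᵀ, 𝜋̃ᵀ)`, where `𝜆̃ᵀ = ((bc)^a, λᵀ)`,
`𝜇̃ᵀ = μᵀ + ((ac)^b)` and `𝜋̃ᵀ = πᵀ + ((ab)^c)`. -/
def HasPedestalMarginals (Q : Finset (ℕ × ℕ × ℕ)) (l m q : YoungDiagram)
    (a b c : ℕ) : Prop :=
  (∀ i, margX Q i = if i < a then b * c else l.colLen (i - a)) ∧
  (∀ j, margY Q j = m.colLen j + (if j < b then a * c else 0)) ∧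
  (∀ k, margZ Q k = q.colLen k + (if k < c then a * b else 0))

/-! If `P` has marginals `(λᵀ, μᵀ, πᵀ)` then `|P| = |λ|` and
`Σ_{p ∈ P} (x + y + z) = Σ iλᵀᵢ + Σ jμᵀⱼ + Σ kπᵀₖ`, which for a simplex-like triple is `p(|P|)`.
This value is a lower bound for every `n`-point set `S`: when `|P_r| ≤ n`, the terms of
`Σ (x + y + z − r)` are negative exactly on `P_r`, so this sum over `S` is at least the sum
over `P_r`. A minimiser is downward closed, since trading one of its points for a missing
smaller one would lower the sum.

If `Q` has the pedestalled marginals, its `y`- and `z`-marginals vanish from `b` and `c` on,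
so the slices `x = i < a`, each of `bc` points, fill the box `[a] × [b] × [c]`. The rest of `Q`
is a translate of a point set with marginals `(λᵀ, μᵀ, πᵀ)`: a pyramid lying in `y < b, z < c`.
-/

open Finset

lemma _root_.YoungDiagram.lt_rowLen_zero_of_colLen_pos {l : YoungDiagram} {j : ℕ}
    (h : 0 < l.colLen j) : j < l.rowLen 0 :=
  YoungDiagram.mem_iff_lt_rowLen.1 (YoungDiagram.mem_iff_lt_colLen.2 h)

section Fibers

variable {α : Type*} {s : Finset α} {l : YoungDiagram} {f : α → ℕ}
  (hf : ∀ j, (s.filter (fun x => f x = j)).card = l.colLen j)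
include hf

lemma lt_rowLen_of_card_fiber_eq_colLen {x : α} (hx : x ∈ s) : f x < l.rowLen 0 :=
  YoungDiagram.lt_rowLen_zero_of_colLen_pos <| hf (f x) ▸ card_pos.2 ⟨x, mem_filter.2 ⟨hx, rfl⟩⟩

lemma card_eq_sum_colLen_of_card_fiber_eq_colLen :
    s.card = ∑ j ∈ range (l.rowLen 0), l.colLen j := by
  rw [card_eq_sum_card_fiberwise fun x hx => mem_range.2 (lt_rowLen_of_card_fiber_eq_colLen hf hx)]
  exact sum_congr rfl fun j _ => hf j

lemma sum_eq_wsum_of_card_fiber_eq_colLen : ∑ x ∈ s, f x = wsum l := by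
  rw [← sum_fiberwise_of_maps_to
    fun x hx => mem_range.2 (lt_rowLen_of_card_fiber_eq_colLen hf hx), wsum]
  refine sum_congr rfl fun j _ => ?_
  rw [sum_congr rfl fun x hx => (mem_filter.1 hx).2, sum_const, hf, smul_eq_mul, mul_comm]

end Fibers

lemma _root_.YoungDiagram.card_eq_sum_colLen (l : YoungDiagram) :
    l.card = ∑ j ∈ range (l.rowLen 0), l.colLen j :=
  card_eq_sum_colLen_of_card_fiber_eq_colLen (f := Prod.snd) fun _ => l.colLen_eq_card.symm

lemma card_eq_of_card_fiber_eq_colLen {α : Type*} {s : Finset α} {l : YoungDiagram}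
    {f : α → ℕ} (hf : ∀ j, (s.filter (fun x => f x = j)).card = l.colLen j) :
    s.card = l.card := by
  rw [card_eq_sum_colLen_of_card_fiber_eq_colLen hf, l.card_eq_sum_colLen]

section Marginals

variable {P : Finset (ℕ × ℕ × ℕ)} {l m q : YoungDiagram}

lemma HasMarginals.card_eq (hP : HasMarginals P l m q) : P.card = l.card :=
  card_eq_of_card_fiber_eq_colLen (s := P) (f := fun p => p.1) hP.1

lemma HasMarginals.ssum_eq (hP : HasMarginals P l m q) :
    ssum P = wsum l + wsum m + wsum q := by
  rw [ssum, sum_add_distrib, sum_add_distrib,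
    sum_eq_wsum_of_card_fiber_eq_colLen (s := P) (f := fun p => p.1) hP.1,
    sum_eq_wsum_of_card_fiber_eq_colLen (s := P) (f := fun p => p.2.1) hP.2.1,
    sum_eq_wsum_of_card_fiber_eq_colLen (s := P) (f := fun p => p.2.2) hP.2.2]

end Marginals

section Simplex

lemma mem_simplexN {p : ℕ × ℕ × ℕ} {r : ℕ} : p ∈ simplexN r ↔ p.1 + p.2.1 + p.2.2 < r := by
  simp only [simplexN, mem_filter, mem_product, mem_range]
  omega

lemma pval_le_ssum (S : Finset (ℕ × ℕ × ℕ)) {r : ℕ} (hr : (simplexN r).card ≤ S.card) :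
    pval S.card r ≤ ssum S := by
  set g : ℕ × ℕ × ℕ → ℤ := fun p => (p.1 + p.2.1 + p.2.2 : ℕ) - (r : ℤ)
  have hsimplex : ∑ p ∈ simplexN r, g p ≤ ∑ p ∈ S.filter (· ∈ simplexN r), g p := by
    rw [← sum_filter_add_sum_filter_not (simplexN r) (· ∈ S), filter_mem_eq_inter,
      filter_mem_eq_inter, inter_comm]
    refine add_le_of_le_of_nonpos le_rfl (sum_nonpos fun p hp => ?_)
    have := mem_simplexN.1 (mem_filter.1 hp).1
    simp only [g]
    omega
  have hS : ∑ p ∈ S.filter (· ∈ simplexN r), g p ≤ ∑ p ∈ S, g p :=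
    sum_le_sum_of_subset_of_nonneg (filter_subset _ _) fun p hpS hp => by
      have := mem_simplexN.not.1 fun h => hp (mem_filter.2 ⟨hpS, h⟩)
      simp only [g]
      omega
  have key := hsimplex.trans hS
  simp only [g, sum_sub_distrib, sum_const, nsmul_eq_mul] at key
  rw [pval, ssum, ssum]
  push_cast at key
  zify [hr]
  linarith

lemma pOfN_le_ssum (S : Finset (ℕ × ℕ × ℕ)) : pOfN S.card ≤ ssum S :=
  pval_le_ssum S <| Nat.findGreatest_spec (P := fun r => (simplexN r).card ≤ S.card)
    (Nat.zero_le _) (by simp [simplexN])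

lemma isPyramid_of_ssum_eq_pOfN {P : Finset (ℕ × ℕ × ℕ)} (hP : ssum P = pOfN P.card) :
    IsPyramid P := by
  intro x y z x' y' z' hmem hx hy hz
  by_contra hnot
  have hlt : x' + y' + z' < x + y + z := by
    by_contra! hge
    obtain rfl : x' = x := by omega
    obtain rfl : y' = y := by omega
    obtain rfl : z' = z := by omega
    exact hnot hmem
  have hnotin : (x', y', z') ∉ P.erase (x, y, z) := fun h => hnot (mem_of_mem_erase h)
  have hcard : (insert (x', y', z') (P.erase (x, y, z))).card = P.card := by
    rw [card_insert_of_notMem hnotin, card_erase_add_one hmem]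
  have hsum : ssum (insert (x', y', z') (P.erase (x, y, z))) + (x + y + z)
      = ssum P + (x' + y' + z') := by
    rw [ssum, sum_insert hnotin, ssum, ← add_sum_erase P _ hmem]
    ring
  have := pOfN_le_ssum (insert (x', y', z') (P.erase (x, y, z)))
  rw [hcard] at this
  omega

lemma isPyramid_of_hasMarginals {P : Finset (ℕ × ℕ × ℕ)} {l m q : YoungDiagram}
    (hlmq : SimplexLike l m q) (hP : HasMarginals P l m q) : IsPyramid P :=
  isPyramid_of_ssum_eq_pOfN <| by rw [hP.ssum_eq, hP.card_eq, hlmq.2.2.2.2]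

end Simplex

section Pedestal

variable {a b c : ℕ} {P : Finset (ℕ × ℕ × ℕ)}

lemma mem_pedestalMap {p : ℕ × ℕ × ℕ} :
    p ∈ pedestalMap a b c P ↔
      (p.1 < a ∧ p.2.1 < b ∧ p.2.2 < c) ∨ (a ≤ p.1 ∧ (p.1 - a, p.2.1, p.2.2) ∈ P) := by
  obtain ⟨x, y, z⟩ := p
  simp only [pedestalMap, mem_union, mem_product, mem_range, mem_image, Prod.ext_iff]
  constructor
  · rintro (hbox | ⟨p, hp, rfl, rfl, rfl⟩)
    · exact .inl hbox
    · exact .inr ⟨by omega, by simpa using hp⟩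
  · rintro (hbox | ⟨hax, hp⟩)
    · exact .inl hbox
    · exact .inr ⟨_, hp, by omega, rfl, rfl⟩

lemma add_mem_pedestalMap_iff {p : ℕ × ℕ × ℕ} :
    (a + p.1, p.2.1, p.2.2) ∈ pedestalMap a b c P ↔ p ∈ P := by
  simp [mem_pedestalMap]

lemma pedestalMap_injective (a b c : ℕ) : Function.Injective (pedestalMap a b c) := by
  intro P P' h
  ext p
  rw [← add_mem_pedestalMap_iff (a := a) (b := b) (c := c), h, add_mem_pedestalMap_iff]

lemma card_filter_pedestalMap (g : ℕ × ℕ × ℕ → Prop) [DecidablePred g] :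
    ((pedestalMap a b c P).filter g).card =
      ((range a ×ˢ (range b ×ˢ range c)).filter g).card +
        (P.filter fun p => g (a + p.1, p.2.1, p.2.2)).card := by
  have hinj : Function.Injective fun p : ℕ × ℕ × ℕ => (a + p.1, p.2.1, p.2.2) := by
    intro p p' h
    simp only [Prod.ext_iff] at h ⊢
    omega
  rw [pedestalMap, filter_union, card_union_of_disjoint, filter_image,
    card_image_of_injective _ hinj]
  refine disjoint_left.2 fun p hbox himage => ?_
  simp only [mem_filter, mem_product, mem_range, mem_image] at hbox himage
  obtain ⟨⟨p, -, rfl⟩, -⟩ := himage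
  omega

lemma margX_pedestalMap (i : ℕ) :
    margX (pedestalMap a b c P) i = if i < a then b * c else margX P (i - a) := by
  rw [margX, card_filter_pedestalMap, filter_product_left (fun x => x = i), card_product,
    filter_eq', margX]
  by_cases hi : i < a
  · rw [if_pos (mem_range.2 hi), if_pos hi, card_singleton, one_mul, card_product, card_range,
      card_range, filter_false_of_mem fun p _ => by omega, card_empty, add_zero]
  · simp only [mem_range, hi, if_false, card_empty, zero_mul, zero_add]
    congr 1
    exact filter_congr fun p _ => by omega

lemma margY_pedestalMap (j : ℕ) :
    margY (pedestalMap a b c P) j = margY P j + if j < b then a * c else 0 := by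
  rw [margY, card_filter_pedestalMap, filter_product_right (fun x : ℕ × ℕ => x.1 = j),
    filter_product_left (fun x => x = j), card_product, card_product, filter_eq', add_comm]
  split_ifs <;> simp_all [margY]

lemma margZ_pedestalMap (k : ℕ) :
    margZ (pedestalMap a b c P) k = margZ P k + if k < c then a * b else 0 := by
  rw [margZ, card_filter_pedestalMap, filter_product_right (fun x : ℕ × ℕ => x.2 = k),
    filter_product_right (fun x => x = k), card_product, card_product, filter_eq', add_comm]
  split_ifs <;> simp_all [margZ]

lemma hasPedestalMarginals_pedestalMap_iff {l m q : YoungDiagram} :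
    HasPedestalMarginals (pedestalMap a b c P) l m q a b c ↔ HasMarginals P l m q := by
  simp only [HasPedestalMarginals, HasMarginals, margX_pedestalMap, margY_pedestalMap,
    margZ_pedestalMap, add_left_inj, and_congr_left_iff]
  refine fun _ => ⟨fun h i => by simpa using h (a + i), fun h i => ?_⟩
  split_ifs
  · rfl
  · exact h _

lemma isPyramid_pedestalMap (hP : IsPyramid P) (hbc : ∀ p ∈ P, p.2.1 < b ∧ p.2.2 < c) :
    IsPyramid (pedestalMap a b c P) := by
  intro x y z x' y' z' hmem hx hy hz
  simp only [mem_pedestalMap] at hmem ⊢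
  rcases hmem with hbox | ⟨hax, hmem⟩
  · exact .inl (by omega)
  by_cases hxa : x' < a
  · exact .inl (by have := hbc _ hmem; simp only at this; omega)
  · exact .inr ⟨by omega, hP _ _ _ _ _ _ hmem (by omega) hy hz⟩

lemma exists_eq_pedestalMap {Q : Finset (ℕ × ℕ × ℕ)}
    (hbox : Q.filter (·.1 < a) = range a ×ˢ (range b ×ˢ range c)) :
    ∃ P, pedestalMap a b c P = Q := by
  refine ⟨(Q.filter (a ≤ ·.1)).image fun p => (p.1 - a, p.2.1, p.2.2), ?_⟩
  ext ⟨x, y, z⟩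
  have hbox' := fun p => congrArg (p ∈ ·) hbox
  simp only [mem_filter, mem_product, mem_range, eq_iff_iff] at hbox'
  simp only [mem_pedestalMap, mem_image, mem_filter, Prod.ext_iff]
  constructor
  · rintro (hlt | ⟨hax, ⟨x', y', z'⟩, ⟨hmem, hax'⟩, hx, rfl, rfl⟩)
    · exact ((hbox' (x, y, z)).2 hlt).1
    · obtain rfl : x' = x := by simp only at hx hax'; omega
      exact hmem
  · intro hmem
    by_cases hxa : x < a
    · exact .inl ((hbox' (x, y, z)).1 ⟨hmem, hxa⟩)
    · exact .inr ⟨by omega, (x, y, z), ⟨hmem, by simp only; omega⟩, rfl, rfl, rfl⟩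

end Pedestal

namespace HasPedestalMarginals

variable {Q : Finset (ℕ × ℕ × ℕ)} {l m q : YoungDiagram} {a b c : ℕ}
  (hQ : HasPedestalMarginals Q l m q a b c) (hb : m.rowLen 0 ≤ b) (hc : q.rowLen 0 ≤ c)
include hQ hb hc

lemma snd_lt_and_thd_lt {p : ℕ × ℕ × ℕ} (hp : p ∈ Q) : p.2.1 < b ∧ p.2.2 < c := by
  have hy : 0 < margY Q p.2.1 := card_pos.2 ⟨p, mem_filter.2 ⟨hp, rfl⟩⟩
  have hz : 0 < margZ Q p.2.2 := card_pos.2 ⟨p, mem_filter.2 ⟨hp, rfl⟩⟩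
  rw [hQ.2.1] at hy
  rw [hQ.2.2] at hz
  constructor
  · by_contra h
    rw [if_neg h, add_zero] at hy
    exact h ((m.lt_rowLen_zero_of_colLen_pos hy).trans_le hb)
  · by_contra h
    rw [if_neg h, add_zero] at hz
    exact h ((q.lt_rowLen_zero_of_colLen_pos hz).trans_le hc)

lemma filter_fst_lt_eq : Q.filter (·.1 < a) = range a ×ˢ (range b ×ˢ range c) := by
  refine eq_of_subset_of_card_le (fun p hp => ?_) ?_
  · obtain ⟨hpQ, hpa⟩ := mem_filter.1 hp
    simpa [hpa] using hQ.snd_lt_and_thd_lt hb hc hpQ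
  have hslice : ∀ i ∈ range a, ((Q.filter (·.1 < a)).filter (·.1 = i)).card = b * c := by
    intro i hi
    have := hQ.1 i
    rw [if_pos (mem_range.1 hi), margX] at this
    rw [filter_filter, ← this]
    exact congrArg card (filter_congr fun p _ => by simp only [mem_range] at hi; omega)
  rw [card_eq_sum_card_fiberwise (f := Prod.fst) (t := range a)
      fun p hp => mem_range.2 (mem_filter.1 hp).2,
    sum_congr rfl hslice, sum_const, card_range, smul_eq_mul, card_product, card_product,
    card_range, card_range, card_range]

end HasPedestalMarginals

theorem pedestal_bijection_general
    (l m q : YoungDiagram) (r a b c : ℕ)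
    (hsl : SimplexLike l m q)
    (hcm : m.rowLen 0 ≤ r + 1) (hcq : q.rowLen 0 ≤ r + 1)
    (hb : r + 1 ≤ b) (hc : r + 1 ≤ c) :
    Set.BijOn (pedestalMap a b c)
        {P : Finset (ℕ × ℕ × ℕ) | HasMarginals P l m q}
        {Q : Finset (ℕ × ℕ × ℕ) | HasPedestalMarginals Q l m q a b c} ∧
      ∀ Q : Finset (ℕ × ℕ × ℕ), HasPedestalMarginals Q l m q a b c → IsPyramid Q := by
  have hpreimage : ∀ Q, HasPedestalMarginals Q l m q a b c →
      ∃ P, HasMarginals P l m q ∧ pedestalMap a b c P = Q := by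
    intro Q hQ
    obtain ⟨P, rfl⟩ := exists_eq_pedestalMap (hQ.filter_fst_lt_eq (hcm.trans hb) (hcq.trans hc))
    exact ⟨P, hasPedestalMarginals_pedestalMap_iff.1 hQ, rfl⟩
  refine ⟨⟨fun P hP => hasPedestalMarginals_pedestalMap_iff.2 hP,
    (pedestalMap_injective a b c).injOn, hpreimage⟩, fun Q hQ => ?_⟩
  obtain ⟨P, hP, rfl⟩ := hpreimage Q hQ
  exact isPyramid_pedestalMap (isPyramid_of_hasMarginals hsl hP) fun p hp =>
    hQ.snd_lt_and_thd_lt (hcm.trans hb) (hcq.trans hc) (p := (a + p.1, p.2.1, p.2.2))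
      (add_mem_pedestalMap_iff.2 hp)

/-- Let `(λ, μ, π)` be a simplex-like triple with at most `r + 1` columns
each, `a ≥ 0` and `b, c ≥ r + 1`.  Then adjoining the `a × b × c` box is a bijection between
point sets `P` with marginals `(λᵀ, μᵀ, πᵀ)` and point sets `Q` with the pedestalled marginals
`(𝜆̃ᵀ, 𝜇̃ᵀ, 𝜋̃ᵀ) = (((bc)^a, λᵀ), μᵀ + ((ac)^b), πᵀ + ((ab)^c))`; moreover every such `Q` is a
pyramid. -/
theorem pedestal_bijection
    (l m q : YoungDiagram) (r a b c : ℕ)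
    (hsl : SimplexLike l m q)
    (hcl : l.rowLen 0 ≤ r + 1) (hcm : m.rowLen 0 ≤ r + 1) (hcq : q.rowLen 0 ≤ r + 1)
    (hb : r + 1 ≤ b) (hc : r + 1 ≤ c) :
    Set.BijOn (pedestalMap a b c)
        {P : Finset (ℕ × ℕ × ℕ) | HasMarginals P l m q}
        {Q : Finset (ℕ × ℕ × ℕ) | HasPedestalMarginals Q l m q a b c} ∧
      ∀ Q : Finset (ℕ × ℕ × ℕ), HasPedestalMarginals Q l m q a b c → IsPyramid Q :=
  pedestal_bijection_general l m q r a b c hsl hcm hcq hb hc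

end
end KronPaper
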